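/- Let S be a *-semigroup and a ∈ S. Then the following are equivalent: (1) a is *-DMP with index m; (2) a has a pseudo core inverse a^Ⓓ with index m and a dual pseudo core inverse a_Ⓓ with index m, and a^Ⓓ = a_Ⓓ; (3) a has a pseudo core inverse a^Ⓓ with index m and a dual pseudo core inverse a_Ⓓ with index m, and a a^Ⓓ = a_Ⓓ a. -/
import Mathlib


variable {S : Type*}

/-- `spow a m` is `a^m` for `m ≥ 1` in a semigroup (junk value `a` at `m = 0`). -/
def spow [Semigroup S] (a : S) : ℕ → S
  | 0 => a
  | 1 => a
  | (n + 2) => spow a (n + 1) * a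

/-- `x` is a `{1,3}`-inverse of `a`. -/
def Is13Inv [Semigroup S] [StarMul S] (a x : S) : Prop :=
  a * x * a = a ∧ star (a * x) = a * x

/-- `x` is the Moore–Penrose inverse of `a`. -/
def IsMPInv [Semigroup S] [StarMul S] (a x : S) : Prop :=
  a * x * a = a ∧ x * a * x = x ∧ star (a * x) = a * x ∧ star (x * a) = x * a

/-- `x` is the group inverse of `a`. -/
def IsGroupInv [Semigroup S] (a x : S) : Prop :=
  a * x * a = a ∧ x * a * x = x ∧ a * x = x * a

/-- `a` is EP: the group inverse and Moore–Penrose inverse of `a` exist and coincide. -/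
def IsEP [Semigroup S] [StarMul S] (a : S) : Prop :=
  ∃ x, IsGroupInv a x ∧ IsMPInv a x

/-- `a` is *-DMP with index `m`: `m` is the smallest positive integer with `a^m` EP. -/
def IsStarDMPWithIndex [Semigroup S] [StarMul S] (a : S) (m : ℕ) : Prop :=
  0 < m ∧ IsEP (spow a m) ∧ ∀ k, 0 < k → IsEP (spow a k) → m ≤ k

/-- The defining equations of a Drazin inverse `x` of `a` relative to the exponent `m`. -/
def DrazinEqs [Semigroup S] (a x : S) (m : ℕ) : Prop :=
  spow a m * x * a = spow a m ∧ x * a * x = x ∧ a * x = x * a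

/-- `x` is the Drazin inverse of `a` with (minimal) index `m`. -/
def IsDrazinWithIndex [Semigroup S] (a x : S) (m : ℕ) : Prop :=
  0 < m ∧ DrazinEqs a x m ∧ ∀ k, 0 < k → (∃ y, DrazinEqs a y k) → m ≤ k

/-- The defining equations of a pseudo core inverse `x` of `a` relative to the exponent `m`. -/
def PCoreEqs [Semigroup S] [StarMul S] (a x : S) (m : ℕ) : Prop :=
  x * spow a (m + 1) = spow a m ∧ a * (x * x) = x ∧ star (a * x) = a * x

/-- `x` is the pseudo core inverse of `a` with (minimal) index `m`. -/
def IsPCoreWithIndex [Semigroup S] [StarMul S] (a x : S) (m : ℕ) : Prop :=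
  0 < m ∧ PCoreEqs a x m ∧ ∀ k y, 0 < k → PCoreEqs a y k → m ≤ k

/-- The defining equations of a dual pseudo core inverse `x` of `a` relative to exponent `m`. -/
def DPCoreEqs [Semigroup S] [StarMul S] (a x : S) (m : ℕ) : Prop :=
  spow a (m + 1) * x = spow a m ∧ x * x * a = x ∧ star (x * a) = x * a

/-- `x` is the dual pseudo core inverse of `a` with (minimal) index `m`. -/
def IsDPCoreWithIndex [Semigroup S] [StarMul S] (a x : S) (m : ℕ) : Prop :=
  0 < m ∧ DPCoreEqs a x m ∧ ∀ k y, 0 < k → DPCoreEqs a y k → m ≤ k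

section Basics
variable [Semigroup S]

theorem spow_one (a : S) : spow a 1 = a := rfl

theorem spow_succ (a : S) {n : ℕ} (h : 1 ≤ n) : spow a (n + 1) = spow a n * a := by
  cases n with
  | zero => omega
  | succ k => rfl


theorem spow_add (a : S) {i j : ℕ} (hi : 1 ≤ i) (hj : 1 ≤ j) :
    spow a (i + j) = spow a i * spow a j := by
  induction j with
  | zero => omega
  | succ k ih =>
    cases k with
    | zero => exact spow_succ a hi
    | succ l =>
      have h2 : i + (l + 1 + 1) = (i + (l + 1)) + 1 := by omega
      rw [h2, spow_succ a (show 1 ≤ i + (l+1) by omega), ih (by omega), mul_assoc,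
        ← spow_succ a (show 1 ≤ l + 1 by omega)]

theorem comm_spow {a x : S} (h : a * x = x * a) : ∀ n, a * spow x n = spow x n * a := by
  intro n
  induction n with
  | zero => exact h
  | succ k ih =>
    cases k with
    | zero => exact h
    | succ j =>
      have h1 : spow x (j + 1 + 1) = spow x (j + 1) * x := rfl
      rw [h1, ← mul_assoc, ih, mul_assoc, h, ← mul_assoc]

theorem spow_comm_self (a : S) (n : ℕ) : a * spow a n = spow a n * a :=
  comm_spow rfl n

theorem spow_comm_spow {a x : S} (h : a * x = x * a) (i j : ℕ) :
    spow a i * spow x j = spow x j * spow a i :=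
  (comm_spow (comm_spow h j).symm i).symm

theorem spow_succ' (a : S) {n : ℕ} (h : 1 ≤ n) : spow a (n + 1) = a * spow a n := by
  rw [spow_succ a h, ← spow_comm_self]

end Basics
section GroupInv
variable [Semigroup S] {b x y c : S}

theorem groupInv_comm (h : IsGroupInv b x) (hc : b * c = c * b) : x * c = c * x := by
  obtain ⟨h1, h2, h3⟩ := h
  have e1 : x * x * b = x := by rw [mul_assoc, ← h3, ← mul_assoc]; exact h2
  have e2 : b * x * x = x := by rw [h3]; exact h2
  have e3 : b * b * x = b := by rw [mul_assoc, h3, ← mul_assoc]; exact h1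
  have e4 : x * b * b = b := by rw [← h3]; exact h1
  have A : x * c = x * b * c * x := by
    calc x * c
        = x * x * b * c := by rw [e1]
      _ = x * x * (c * b) := by rw [mul_assoc (x*x) b c, hc]
      _ = x * x * (c * (b * b * x)) := by rw [e3]
      _ = x * x * (b * c * (b * x)) := by
            rw [hc]
            simp only [mul_assoc]
      _ = x * x * b * (c * b) * x := by simp only [mul_assoc]
      _ = x * x * b * (b * c) * x := by rw [hc]
      _ = x * (b * c) * x := by rw [e1]
      _ = x * b * c * x := by simp only [mul_assoc]
  have B : c * x = x * b * c * x := by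
    calc c * x
        = c * (b * x * x) := by rw [e2]
      _ = b * c * (x * x) := by
            simp only [← mul_assoc]
            rw [← hc]
      _ = x * b * b * c * (x * x) := by rw [e4]
      _ = x * b * (b * c) * (x * x) := by simp only [mul_assoc]
      _ = x * b * (c * b) * (x * x) := by rw [hc]
      _ = x * b * c * (b * x * x) := by simp only [mul_assoc]
      _ = x * b * c * x := by rw [e2]
  exact A.trans B.symm

theorem groupInv_unique (hx : IsGroupInv b x) (hy : IsGroupInv b y) : x = y := by
  obtain ⟨hx1, hx2, hx3⟩ := hx
  obtain ⟨hy1, hy2, hy3⟩ := hy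
  have e3x : b * b * x = b := by rw [mul_assoc, hx3, ← mul_assoc]; exact hx1
  have e3' : b * (b * x) = b := by rw [← mul_assoc]; exact e3x
  have s1 : (b * y) * (b * x) = b * x := by rw [← mul_assoc, hy1]
  have s2 : (b * y) * (b * x) = b * y := by rw [hy3, mul_assoc, e3']
  have ef : b * x = b * y := s1.symm.trans s2
  calc x = x * (b * x) := by rw [← mul_assoc, hx2]
    _ = x * (b * y) := by rw [ef]
    _ = (x * b) * y := by rw [mul_assoc]
    _ = (b * x) * y := by rw [hx3]
    _ = (b * y) * y := by rw [ef]
    _ = y := by rw [hy3]; exact hy2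

end GroupInv
section Drazin
variable [Semigroup S] {a z : S}

theorem draz_comm_za (hc : a * z = z * a) : (z * a) * a = a * (z * a) := by
  rw [← mul_assoc, ← hc]

theorem draz_T (hc : a * z = z * a) (hzaz : z * a * z = z) :
    ∀ j, 1 ≤ j → spow a j * spow z j = a * z := by
  intro j hj
  induction j with
  | zero => omega
  | succ k ih =>
    cases k with
    | zero => rfl
    | succ l =>
      have hk : 1 ≤ l + 1 := by omega
      calc spow a (l+1+1) * spow z (l+1+1)
          = (a * spow a (l+1)) * (spow z (l+1) * z) := by
            rw [spow_succ' a hk, spow_succ z hk]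
        _ = a * (spow a (l+1) * spow z (l+1)) * z := by simp only [mul_assoc]
        _ = a * (a * z) * z := by rw [ih hk]
        _ = a * (z * a * z) := by rw [hc]; simp only [mul_assoc]
        _ = a * z := by rw [hzaz]

theorem draz_R1 (hc : a * z = z * a) {n : ℕ} (hn : spow a n * z * a = spow a n) :
    ∀ j, 1 ≤ j → spow a n * spow z j * spow a j = spow a n := by
  intro j hj
  induction j with
  | zero => omega
  | succ k ih =>
    cases k with
    | zero => exact hn
    | succ l =>
      have hk : 1 ≤ l + 1 := by omega
      have hcs := comm_spow (draz_comm_za hc) (l+1)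
      calc spow a n * spow z (l+1+1) * spow a (l+1+1)
          = spow a n * (spow z (l+1) * z) * (a * spow a (l+1)) := by
            rw [spow_succ z hk, spow_succ' a hk]
        _ = spow a n * spow z (l+1) * ((z * a) * spow a (l+1)) := by simp only [mul_assoc]
        _ = spow a n * spow z (l+1) * (spow a (l+1) * (z * a)) := by rw [hcs]
        _ = spow a n * spow z (l+1) * spow a (l+1) * z * a := by simp only [mul_assoc]
        _ = spow a n * z * a := by rw [ih hk]
        _ = spow a n := hn

theorem draz_R2 (hc : a * z = z * a) (hzaz : z * a * z = z) :
    ∀ j, 1 ≤ j → spow z j * spow a j * z = z := by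
  intro j hj
  induction j with
  | zero => omega
  | succ k ih =>
    cases k with
    | zero => exact hzaz
    | succ l =>
      have hk : 1 ≤ l + 1 := by omega
      have hcs := comm_spow (draz_comm_za hc) (l+1)
      calc spow z (l+1+1) * spow a (l+1+1) * z
          = spow z (l+1) * z * (a * spow a (l+1)) * z := by
            rw [spow_succ z hk, spow_succ' a hk]
        _ = spow z (l+1) * ((z * a) * spow a (l+1)) * z := by simp only [mul_assoc]
        _ = spow z (l+1) * (spow a (l+1) * (z * a)) * z := by rw [hcs]
        _ = spow z (l+1) * spow a (l+1) * (z * a * z) := by simp only [mul_assoc]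
        _ = spow z (l+1) * spow a (l+1) * z := by rw [hzaz]
        _ = z := ih hk

theorem draz_R2' (hc : a * z = z * a) (hzaz : z * a * z = z) :
    ∀ j, 1 ≤ j → spow z j * spow a j * spow z j = spow z j := by
  intro j hj
  cases j with
  | zero => omega
  | succ k =>
    cases k with
    | zero => exact hzaz
    | succ l =>
      have hk : 1 ≤ l + 1 := by omega
      calc spow z (l+1+1) * spow a (l+1+1) * spow z (l+1+1)
          = spow z (l+1+1) * spow a (l+1+1) * (z * spow z (l+1)) := by
            rw [spow_succ' z hk]
        _ = (spow z (l+1+1) * spow a (l+1+1) * z) * spow z (l+1) := by simp only [mul_assoc]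
        _ = z * spow z (l+1) := by rw [draz_R2 hc hzaz (l+1+1) (by omega)]
        _ = spow z (l+1+1) := (spow_succ' z hk).symm

end Drazin

section DrazinMono
variable [Semigroup S] {a z : S}

theorem drazin_mono {k n : ℕ} (h : DrazinEqs a z k) (hk : 1 ≤ k) (hkn : k ≤ n) :
    DrazinEqs a z n := by
  obtain ⟨h1, h2, h3⟩ := h
  refine ⟨?_, h2, h3⟩
  rcases Nat.eq_or_lt_of_le hkn with heq | hlt
  · rw [← heq]; exact h1
  · have ht : 1 ≤ n - k := by omega
    have hn : n = (n - k) + k := by omega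
    rw [hn, spow_add a ht hk]
    calc spow a (n-k) * spow a k * z * a
        = spow a (n-k) * (spow a k * z * a) := by simp only [mul_assoc]
      _ = spow a (n-k) * spow a k := by rw [h1]

end DrazinMono
set_option linter.unusedSectionVars false
section PCoreDrazin
variable [Semigroup S] [StarMul S] {a y : S} {k : ℕ}

theorem pcore_pY (hB : a * (y * y) = y) :
    ∀ j, 1 ≤ j → a * spow y (j + 1) = spow y j := by
  intro j hj
  induction j with
  | zero => omega
  | succ t ih =>
    cases t with
    | zero => exact hB
    | succ l =>
      have ht : 1 ≤ l + 1 := by omega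
      calc a * spow y (l+1+1+1)
          = a * (spow y (l+1+1) * y) := by rw [spow_succ y (by omega : 1 ≤ l+1+1)]
        _ = (a * spow y (l+1+1)) * y := by rw [mul_assoc]
        _ = spow y (l+1) * y := by rw [ih ht]
        _ = spow y (l+1+1) := (spow_succ y ht).symm

theorem pcore_pY2 (hB : a * (y * y) = y) :
    ∀ i, 1 ≤ i → ∀ j, 1 ≤ j → spow a i * spow y (i + j) = spow y j := by
  intro i hi
  induction i with
  | zero => omega
  | succ t ih =>
    intro j hj
    cases t with
    | zero =>
      rw [show (0 + 1 + j : ℕ) = j + 1 from by omega]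
      exact pcore_pY hB j hj
    | succ l =>
      have ht : 1 ≤ l + 1 := by omega
      calc spow a (l+1+1) * spow y (l+1+1+j)
          = (a * spow a (l+1)) * spow y ((l+1) + (j+1)) := by
            rw [spow_succ' a ht, show (l+1+1+j : ℕ) = (l+1) + (j+1) from by omega]
        _ = a * (spow a (l+1) * spow y ((l+1) + (j+1))) := by rw [mul_assoc]
        _ = a * spow y (j+1) := by rw [ih ht (j+1) (by omega)]
        _ = spow y j := pcore_pY hB j hj

theorem pcore_pA (hk : 1 ≤ k) (hA : y * spow a (k + 1) = spow a k) :
    ∀ t, y * spow a (k + 1 + t) = spow a (k + t) := by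
  intro t
  induction t with
  | zero => exact hA
  | succ s ih =>
    calc y * spow a (k+1+s+1)
        = y * (spow a (k+1+s) * a) := by rw [spow_succ a (by omega)]
      _ = (y * spow a (k+1+s)) * a := by rw [mul_assoc]
      _ = spow a (k+s) * a := by rw [ih]
      _ = spow a (k+s+1) := (spow_succ a (by omega)).symm

theorem pcore_pA2 (hk : 1 ≤ k) (hA : y * spow a (k + 1) = spow a k) :
    ∀ j, 1 ≤ j → ∀ t, spow y j * spow a (j + k + t) = spow a (k + t) := by
  intro j hj
  induction j with
  | zero => omega
  | succ s ih =>
    intro t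
    cases s with
    | zero =>
      rw [show (0 + 1 + k + t : ℕ) = k + 1 + t from by omega]
      exact pcore_pA hk hA t
    | succ l =>
      have hs : 1 ≤ l + 1 := by omega
      calc spow y (l+1+1) * spow a (l+1+1+k+t)
          = (y * spow y (l+1)) * spow a ((l+1) + k + (t+1)) := by
            rw [spow_succ' y hs, show (l+1+1+k+t : ℕ) = (l+1) + k + (t+1) from by omega]
        _ = y * (spow y (l+1) * spow a ((l+1) + k + (t+1))) := by rw [mul_assoc]
        _ = y * spow a (k + (t+1)) := by rw [ih hs (t+1)]
        _ = y * spow a (k + 1 + t) := by rw [show (k + (t+1) : ℕ) = k + 1 + t from by omega]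
        _ = spow a (k + t) := pcore_pA hk hA t

theorem pcore_pT (hB : a * (y * y) = y) :
    ∀ j, 1 ≤ j → spow a j * spow y j = a * y := by
  intro j hj
  induction j with
  | zero => omega
  | succ t ih =>
    cases t with
    | zero => rfl
    | succ l =>
      have ht : 1 ≤ l + 1 := by omega
      calc spow a (l+1+1) * spow y (l+1+1)
          = (spow a (l+1) * a) * spow y (l+1+1) := by rw [spow_succ a ht]
        _ = spow a (l+1) * (a * spow y ((l+1)+1)) := by rw [mul_assoc]
        _ = spow a (l+1) * spow y (l+1) := by rw [pcore_pY hB (l+1) ht]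
        _ = a * y := ih ht

theorem pcore_to_drazin (hk : 1 ≤ k) (h : PCoreEqs a y k) :
    DrazinEqs a (spow y (k+1) * spow a k) k := by
  obtain ⟨hA, hB, -⟩ := h
  have h2k : spow y k * spow a (k + k) = spow a k := by
    have := pcore_pA2 hk hA k hk 0
    simpa using this
  have za : (spow y (k+1) * spow a k) * a = spow y k * spow a k := by
    calc (spow y (k+1) * spow a k) * a
        = spow y (k+1) * spow a (k+1) := by rw [mul_assoc, ← spow_succ a hk]
      _ = (spow y k * y) * spow a (k+1) := by rw [spow_succ y hk]
      _ = spow y k * (y * spow a (k+1)) := by rw [mul_assoc]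
      _ = spow y k * spow a k := by rw [hA]
  have az : a * (spow y (k+1) * spow a k) = spow y k * spow a k := by
    rw [← mul_assoc, pcore_pY hB k hk]
  refine ⟨?_, ?_, az.trans za.symm⟩
  · calc spow a k * (spow y (k+1) * spow a k) * a
        = spow a k * ((spow y (k+1) * spow a k) * a) := by simp only [mul_assoc]
      _ = spow a k * (spow y k * spow a k) := by rw [za]
      _ = (spow a k * spow y k) * spow a k := by rw [mul_assoc]
      _ = (a * y) * spow a k := by rw [pcore_pT hB k hk]
      _ = (a * y) * (spow y k * spow a (k + k)) := by rw [h2k]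
      _ = a * (y * spow y k) * spow a (k + k) := by simp only [mul_assoc]
      _ = a * spow y (k+1) * spow a (k + k) := by rw [← spow_succ' y hk]
      _ = spow y k * spow a (k + k) := by rw [pcore_pY hB k hk]
      _ = spow a k := h2k
  · calc (spow y (k+1) * spow a k) * a * (spow y (k+1) * spow a k)
        = (spow y k * spow a k) * (spow y (k+1) * spow a k) := by rw [za]
      _ = spow y k * (spow a k * spow y (k + 1)) * spow a k := by simp only [mul_assoc]
      _ = spow y k * spow y 1 * spow a k := by rw [pcore_pY2 hB k hk 1 le_rfl]
      _ = spow y (k+1) * spow a k := by rw [spow_one, ← spow_succ y hk]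
end PCoreDrazin
section DPCoreDrazin
variable [Semigroup S] [StarMul S] {a y : S} {k : ℕ}

theorem dpcore_qY (hB : y * y * a = y) :
    ∀ j, 1 ≤ j → spow y (j + 1) * a = spow y j := by
  intro j hj
  induction j with
  | zero => omega
  | succ t ih =>
    cases t with
    | zero => exact hB
    | succ l =>
      have ht : 1 ≤ l + 1 := by omega
      calc spow y (l+1+1+1) * a
          = (y * spow y (l+1+1)) * a := by rw [spow_succ' y (by omega : 1 ≤ l+1+1)]
        _ = y * (spow y (l+1+1) * a) := by rw [mul_assoc]
        _ = y * spow y (l+1) := by rw [ih ht]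
        _ = spow y (l+1+1) := (spow_succ' y ht).symm

theorem dpcore_qY2 (hB : y * y * a = y) :
    ∀ i, 1 ≤ i → ∀ j, 1 ≤ j → spow y (i + j) * spow a i = spow y j := by
  intro i hi
  induction i with
  | zero => omega
  | succ t ih =>
    intro j hj
    cases t with
    | zero =>
      rw [show (0 + 1 + j : ℕ) = j + 1 from by omega]
      exact dpcore_qY hB j hj
    | succ l =>
      have ht : 1 ≤ l + 1 := by omega
      calc spow y (l+1+1+j) * spow a (l+1+1)
          = spow y ((l+1) + (j+1)) * (spow a (l+1) * a) := by
            rw [spow_succ a ht, show (l+1+1+j : ℕ) = (l+1) + (j+1) from by omega]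
        _ = (spow y ((l+1) + (j+1)) * spow a (l+1)) * a := by rw [mul_assoc]
        _ = spow y (j+1) * a := by rw [ih ht (j+1) (by omega)]
        _ = spow y j := dpcore_qY hB j hj

theorem dpcore_qA (hk : 1 ≤ k) (hA : spow a (k + 1) * y = spow a k) :
    ∀ t, spow a (k + 1 + t) * y = spow a (k + t) := by
  intro t
  induction t with
  | zero => exact hA
  | succ s ih =>
    calc spow a (k+1+s+1) * y
        = (a * spow a (k+1+s)) * y := by rw [spow_succ' a (by omega)]
      _ = a * (spow a (k+1+s) * y) := by rw [mul_assoc]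
      _ = a * spow a (k+s) := by rw [ih]
      _ = spow a (k+s+1) := (spow_succ' a (by omega)).symm

theorem dpcore_qA2 (hk : 1 ≤ k) (hA : spow a (k + 1) * y = spow a k) :
    ∀ j, 1 ≤ j → ∀ t, spow a (j + k + t) * spow y j = spow a (k + t) := by
  intro j hj
  induction j with
  | zero => omega
  | succ s ih =>
    intro t
    cases s with
    | zero =>
      rw [show (0 + 1 + k + t : ℕ) = k + 1 + t from by omega]
      exact dpcore_qA hk hA t
    | succ l =>
      have hs : 1 ≤ l + 1 := by omega
      calc spow a (l+1+1+k+t) * spow y (l+1+1)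
          = spow a ((l+1) + k + (t+1)) * (spow y (l+1) * y) := by
            rw [spow_succ y hs, show (l+1+1+k+t : ℕ) = (l+1) + k + (t+1) from by omega]
        _ = (spow a ((l+1) + k + (t+1)) * spow y (l+1)) * y := by rw [mul_assoc]
        _ = spow a (k + (t+1)) * y := by rw [ih hs (t+1)]
        _ = spow a (k + 1 + t) * y := by rw [show (k + (t+1) : ℕ) = k + 1 + t from by omega]
        _ = spow a (k + t) := dpcore_qA hk hA t

theorem dpcore_qT (hB : y * y * a = y) :
    ∀ j, 1 ≤ j → spow y j * spow a j = y * a := by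
  intro j hj
  induction j with
  | zero => omega
  | succ t ih =>
    cases t with
    | zero => rfl
    | succ l =>
      have ht : 1 ≤ l + 1 := by omega
      calc spow y (l+1+1) * spow a (l+1+1)
          = spow y (l+1+1) * (a * spow a (l+1)) := by rw [spow_succ' a ht]
        _ = (spow y (l+1+1) * a) * spow a (l+1) := by rw [mul_assoc]
        _ = spow y (l+1) * spow a (l+1) := by rw [dpcore_qY hB (l+1) ht]
        _ = y * a := ih ht

theorem dpcore_to_drazin (hk : 1 ≤ k) (h : DPCoreEqs a y k) :
    DrazinEqs a (spow a k * spow y (k+1)) k := by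
  obtain ⟨hA, hB, -⟩ := h
  have h2k : spow a (k + k) * spow y k = spow a k := by
    have := dpcore_qA2 hk hA k hk 0
    simpa using this
  have az : a * (spow a k * spow y (k+1)) = spow a k * spow y k := by
    calc a * (spow a k * spow y (k+1))
        = (a * spow a k) * spow y (k+1) := by rw [← mul_assoc]
      _ = spow a (k+1) * spow y (k+1) := by rw [← spow_succ' a hk]
      _ = spow a (k+1) * (y * spow y k) := by rw [spow_succ' y hk]
      _ = (spow a (k+1) * y) * spow y k := by rw [← mul_assoc]
      _ = spow a k * spow y k := by rw [hA]
  have za : (spow a k * spow y (k+1)) * a = spow a k * spow y k := by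
    rw [mul_assoc, dpcore_qY hB k hk]
  refine ⟨?_, ?_, az.trans za.symm⟩
  · calc spow a k * (spow a k * spow y (k+1)) * a
        = spow a k * ((spow a k * spow y (k+1)) * a) := by simp only [mul_assoc]
      _ = spow a k * (spow a k * spow y k) := by rw [za]
      _ = (spow a k * spow a k) * spow y k := by rw [← mul_assoc]
      _ = spow a (k + k) * spow y k := by rw [← spow_add a hk hk]
      _ = spow a k := h2k
  · calc (spow a k * spow y (k+1)) * a * (spow a k * spow y (k+1))
        = (spow a k * spow y (k+1)) * (a * (spow a k * spow y (k+1))) := by rw [mul_assoc]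
      _ = (spow a k * spow y (k+1)) * (spow a k * spow y k) := by rw [az]
      _ = spow a k * ((spow y (k+1) * spow a k) * spow y k) := by simp only [mul_assoc]
      _ = spow a k * (spow y 1 * spow y k) := by rw [dpcore_qY2 hB k hk 1 le_rfl]
      _ = spow a k * (y * spow y k) := by rw [spow_one]
      _ = spow a k * spow y (k+1) := by rw [← spow_succ' y hk]

end DPCoreDrazin
section EPConstruct
variable [Semigroup S] [StarMul S] {a : S} {m : ℕ}

theorem ep_construct (hm : 1 ≤ m) (h : IsEP (spow a m)) :
    ∃ d, PCoreEqs a d m ∧ DPCoreEqs a d m := by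
  obtain ⟨x, hg, hmp⟩ := h
  obtain ⟨h1, h2, h3⟩ := hg
  have h5 : star (x * spow a m) = x * spow a m := hmp.2.2.2
  have hax : x * a = a * x := groupInv_comm ⟨h1, h2, h3⟩ (spow_comm_self a m).symm
  have hxP : ∀ n, x * spow a n = spow a n * x := comm_spow hax
  have hn1 : 1 ≤ 2*m - 1 := by omega
  have hax' : ∀ w : S, a * (x * w) = x * (a * w) := by
    intro w; rw [← mul_assoc, ← hax, mul_assoc]
  have k1 : x * spow a (2*m) = spow a m := by
    rw [show 2*m = m + m from by omega, spow_add a hm hm, ← mul_assoc, ← h3]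
    exact h1
  have k2 : x * (x * spow a (3*m)) = spow a m := by
    calc x * (x * spow a (3*m))
        = x * (x * (spow a m * spow a (2*m))) := by
          rw [show 3*m = m + 2*m from by omega, spow_add a hm (by omega)]
      _ = x * ((x * spow a m) * spow a (2*m)) := by
          rw [← mul_assoc x (spow a m) (spow a (2*m))]
      _ = x * ((spow a m * x) * spow a (2*m)) := by rw [hxP m]
      _ = x * (spow a m * (x * spow a (2*m))) := by rw [mul_assoc]
      _ = x * (spow a m * spow a m) := by rw [k1]
      _ = x * spow a (2*m) := by rw [← spow_add a hm hm, show m+m = 2*m from by omega]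
      _ = spow a m := k1
  have k3 : x * (x * spow a (2*m)) = x * spow a m := by rw [k1]
  have k4 : x * (x * spow a (4*m-1)) = x * spow a (3*m-1) := by
    calc x * (x * spow a (4*m-1))
        = x * (x * (spow a (2*m) * spow a (2*m-1))) := by
          rw [← spow_add a (by omega) hn1, show 2*m+(2*m-1) = 4*m-1 from by omega]
      _ = (x * (x * spow a (2*m))) * spow a (2*m-1) := by simp only [mul_assoc]
      _ = (x * spow a m) * spow a (2*m-1) := by rw [k3]
      _ = x * spow a (3*m-1) := by
          rw [mul_assoc, ← spow_add a hm hn1, show m + (2*m-1) = 3*m-1 from by omega]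
  have k5 : x * (x * spow a (3*m-1)) = x * spow a (2*m-1) := by
    calc x * (x * spow a (3*m-1))
        = x * (x * (spow a m * spow a (2*m-1))) := by
          rw [← spow_add a hm hn1, show m+(2*m-1) = 3*m-1 from by omega]
      _ = x * ((x * spow a m) * spow a (2*m-1)) := by
          rw [← mul_assoc x (spow a m) (spow a (2*m-1))]
      _ = x * ((spow a m * x) * spow a (2*m-1)) := by rw [hxP m]
      _ = (x * spow a m * x) * spow a (2*m-1) := by simp only [mul_assoc]
      _ = x * spow a (2*m-1) := by rw [h2]
  refine ⟨x * (x * spow a (2*m-1)), ⟨?_, ?_, ?_⟩, ⟨?_, ?_, ?_⟩⟩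
  · -- d * spow a (m+1) = spow a m
    calc (x * (x * spow a (2*m-1))) * spow a (m+1)
        = x * (x * (spow a (2*m-1) * spow a (m+1))) := by simp only [mul_assoc]
      _ = x * (x * spow a (3*m)) := by
          rw [← spow_add a hn1 (by omega), show 2*m-1 + (m+1) = 3*m from by omega]
      _ = spow a m := k2
  · -- a * (d * d) = d
    calc a * ((x * (x * spow a (2*m-1))) * (x * (x * spow a (2*m-1))))
        = a * (x * (x * (spow a (2*m-1) * (x * (x * spow a (2*m-1)))))) := by
          simp only [mul_assoc]
      _ = x * (a * (x * (spow a (2*m-1) * (x * (x * spow a (2*m-1)))))) := by rw [hax']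
      _ = x * (x * (a * (spow a (2*m-1) * (x * (x * spow a (2*m-1)))))) := by rw [hax']
      _ = x * (x * (spow a (2*m) * (x * (x * spow a (2*m-1))))) := by
          rw [← mul_assoc a (spow a (2*m-1)), ← spow_succ' a hn1,
            show 2*m-1+1 = 2*m from by omega]
      _ = x * (x * (x * (spow a (2*m) * (x * spow a (2*m-1))))) := by
          rw [← mul_assoc (spow a (2*m)) x, ← hxP (2*m), mul_assoc]
      _ = x * (x * (x * (x * (spow a (2*m) * spow a (2*m-1))))) := by
          rw [← mul_assoc (spow a (2*m)) x, ← hxP (2*m), mul_assoc]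
      _ = x * (x * (x * (x * spow a (4*m-1)))) := by
          rw [← spow_add a (by omega) hn1, show 2*m + (2*m-1) = 4*m-1 from by omega]
      _ = x * (x * (x * spow a (3*m-1))) := by rw [k4]
      _ = x * (x * spow a (2*m-1)) := by rw [k5]
  · -- star (a * d) = a * d
    have had : a * (x * (x * spow a (2*m-1))) = x * spow a m := by
      calc a * (x * (x * spow a (2*m-1)))
          = x * (a * (x * spow a (2*m-1))) := by rw [hax']
        _ = x * (x * (a * spow a (2*m-1))) := by rw [hax']
        _ = x * (x * spow a (2*m)) := by
            rw [← spow_succ' a hn1, show 2*m-1+1 = 2*m from by omega]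
        _ = x * spow a m := k3
    rw [had]; exact h5
  · -- spow a (m+1) * d = spow a m
    calc spow a (m+1) * (x * (x * spow a (2*m-1)))
        = (spow a (m+1) * x) * (x * spow a (2*m-1)) := by rw [← mul_assoc]
      _ = (x * spow a (m+1)) * (x * spow a (2*m-1)) := by rw [← hxP (m+1)]
      _ = x * ((spow a (m+1) * x) * spow a (2*m-1)) := by simp only [mul_assoc]
      _ = x * ((x * spow a (m+1)) * spow a (2*m-1)) := by rw [← hxP (m+1)]
      _ = x * (x * (spow a (m+1) * spow a (2*m-1))) := by simp only [mul_assoc]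
      _ = x * (x * spow a (3*m)) := by
          rw [← spow_add a (by omega) hn1, show m+1 + (2*m-1) = 3*m from by omega]
      _ = spow a m := k2
  · -- d * d * a = d
    calc (x * (x * spow a (2*m-1))) * (x * (x * spow a (2*m-1))) * a
        = x * (x * (spow a (2*m-1) * (x * (x * (spow a (2*m-1) * a))))) := by
          simp only [mul_assoc]
      _ = x * (x * (spow a (2*m-1) * (x * (x * spow a (2*m))))) := by
          rw [← spow_succ a hn1, show 2*m-1+1 = 2*m from by omega]
      _ = x * (x * (spow a (2*m-1) * (x * spow a m))) := by rw [k3]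
      _ = x * (x * (spow a (2*m-1) * (spow a m * x))) := by rw [hxP m]
      _ = x * (x * (spow a (3*m-1) * x)) := by
          rw [← mul_assoc (spow a (2*m-1)) (spow a m) x, ← spow_add a hn1 hm,
            show 2*m-1+m = 3*m-1 from by omega]
      _ = x * (x * (x * spow a (3*m-1))) := by rw [← hxP (3*m-1)]
      _ = x * (x * spow a (2*m-1)) := by rw [k5]
  · -- star (d * a) = d * a
    have hda : (x * (x * spow a (2*m-1))) * a = x * spow a m := by
      calc (x * (x * spow a (2*m-1))) * a
          = x * (x * (spow a (2*m-1) * a)) := by simp only [mul_assoc]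
        _ = x * (x * spow a (2*m)) := by
            rw [← spow_succ a hn1, show 2*m-1+1 = 2*m from by omega]
        _ = x * spow a m := k3
    rw [hda]; exact h5

end EPConstruct
section Final
variable [Semigroup S] [StarMul S]

theorem starDMP_min {a : S} {m : ℕ} (hm : 0 < m) (hEP : IsEP (spow a m))
    (hmin : ∀ k, 0 < k → IsEP (spow a k) → m ≤ k) {k : ℕ} {z : S}
    (hk : 0 < k) (hz : DrazinEqs a z k) : m ≤ k := by
  by_contra hlt
  push_neg at hlt
  have hzm : DrazinEqs a z m := drazin_mono hz hk (le_of_lt hlt)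
  obtain ⟨hn, hzaz, hc⟩ := hzm
  obtain ⟨hkn, -, -⟩ := hz
  have hw : IsGroupInv (spow a m) (spow z m) :=
    ⟨draz_R1 hc hn m hm, draz_R2' hc hzaz m hm, spow_comm_spow hc m m⟩
  obtain ⟨x, hgx, hmpx⟩ := hEP
  have hwx : spow z m = x := groupInv_unique hw hgx
  have hsym : star (spow a m * spow z m) = spow a m * spow z m := by
    rw [hwx]; exact hmpx.2.2.1
  have hTk : spow a k * spow z k = a * z := draz_T hc hzaz k hk
  have hTm : spow a m * spow z m = a * z := draz_T hc hzaz m hm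
  have hcomk := spow_comm_spow hc k k
  have hEPk : IsEP (spow a k) := ⟨spow z k,
    ⟨draz_R1 hc hkn k hk, draz_R2' hc hzaz k hk, hcomk⟩,
    ⟨draz_R1 hc hkn k hk, draz_R2' hc hzaz k hk,
      by rw [hTk, ← hTm]; exact hsym,
      by rw [← hcomk, hTk, ← hTm]; exact hsym⟩⟩
  have := hmin k hk hEPk
  omega

theorem pc_dpc_to_EP {a x : S} {m : ℕ} (hm : 0 < m)
    (hp : PCoreEqs a x m) (hd : DPCoreEqs a x m) : IsEP (spow a m) := by
  obtain ⟨hA, hB, hs1⟩ := hp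
  obtain ⟨hA', hB', hs2⟩ := hd
  have hcomm : a * x = x * a := by
    calc a * x = a * (x * x * a) := by rw [hB']
      _ = (a * (x * x)) * a := by simp only [mul_assoc]
      _ = x * a := by rw [hB]
  have hzaz : x * a * x = x := by
    calc x * a * x = (a * x) * x := by rw [← hcomm]
      _ = a * (x * x) := by rw [mul_assoc]
      _ = x := hB
  have hn : spow a m * x * a = spow a m := by
    calc spow a m * x * a = spow a m * (x * a) := by rw [mul_assoc]
      _ = spow a m * (a * x) := by rw [← hcomm]
      _ = (spow a m * a) * x := by rw [mul_assoc]
      _ = spow a (m+1) * x := by rw [← spow_succ a hm]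
      _ = spow a m := hA'
  have hT : spow a m * spow x m = a * x := draz_T hcomm hzaz m hm
  have hcom := spow_comm_spow hcomm m m
  exact ⟨spow x m,
    ⟨draz_R1 hcomm hn m hm, draz_R2' hcomm hzaz m hm, hcom⟩,
    ⟨draz_R1 hcomm hn m hm, draz_R2' hcomm hzaz m hm,
      by rw [hT]; exact hs1,
      by rw [← hcom, hT, hcomm]; exact hs2⟩⟩

end Final
/-- Theorem 2.9: `a` is *-DMP with index `m` iff its pseudo core and dual pseudo core
inverses of index `m` exist and coincide (equivalently, `a a^Ⓓ = a_Ⓓ a`). -/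
theorem stmt_5 [Semigroup S] [StarMul S] (a : S) (m : ℕ) :
    List.TFAE
      [ IsStarDMPWithIndex a m,
        ∃ x y, IsPCoreWithIndex a x m ∧ IsDPCoreWithIndex a y m ∧ x = y,
        ∃ x y, IsPCoreWithIndex a x m ∧ IsDPCoreWithIndex a y m ∧ a * x = y * a ] := by
  tfae_have 1 → 2 := by
    rintro ⟨hm, hEP, hmin⟩
    obtain ⟨d, hpc, hdpc⟩ := ep_construct hm hEP
    have hminP : ∀ k y, 0 < k → PCoreEqs a y k → m ≤ k := fun k y hk hy =>
      starDMP_min hm hEP hmin hk (pcore_to_drazin hk hy)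
    have hminD : ∀ k y, 0 < k → DPCoreEqs a y k → m ≤ k := fun k y hk hy =>
      starDMP_min hm hEP hmin hk (dpcore_to_drazin hk hy)
    exact ⟨d, d, ⟨hm, hpc, hminP⟩, ⟨hm, hdpc, hminD⟩, rfl⟩
  tfae_have 2 → 3 := by
    rintro ⟨x, y, hx, hy, rfl⟩
    refine ⟨x, x, hx, hy, ?_⟩
    have hB : a * (x * x) = x := hx.2.1.2.1
    have hB' : x * x * a = x := hy.2.1.2.1
    calc a * x = a * (x * x * a) := by rw [hB']
      _ = (a * (x * x)) * a := by simp only [mul_assoc]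
      _ = x * a := by rw [hB]
  tfae_have 3 → 1 := by
    rintro ⟨x, y, hx, hy, hxy⟩
    have hm := hx.1
    have hBx : a * (x * x) = x := hx.2.1.2.1
    have hBy : y * y * a = y := hy.2.1.2.1
    have hxyeq : x = y := by
      calc x = a * (x * x) := hBx.symm
        _ = (a * x) * x := by rw [mul_assoc]
        _ = (y * a) * x := by rw [hxy]
        _ = y * (a * x) := by rw [mul_assoc]
        _ = y * (y * a) := by rw [hxy]
        _ = y * y * a := by rw [mul_assoc]
        _ = y := hBy
    subst hxyeq
    have hEP : IsEP (spow a m) := pc_dpc_to_EP hm hx.2.1 hy.2.1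
    refine ⟨hm, hEP, ?_⟩
    intro k hk hEPk
    obtain ⟨d, hpc, -⟩ := ep_construct hk hEPk
    exact hx.2.2 k d hk hpc
  tfae_finish
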